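/- The $15$-uniform morphism $\mu$ on $\Sigma_6$ defined by $\mu(0)=012102120102012$, $\mu(1)=201020121012021$, $\mu(2)=012102010212010$, $\mu(3)=201210212021012$, $\mu(4)=102120121012021$, $\mu(5)=102010212021012$ is strongly synchronizing. -/

import Mathlib

/-- `h` is a synchronizing morphism. -/
def Synchronizing {α β : Type*} (h : α → List β) : Prop :=
  ∀ (a b c : α) (r s : List β), h a ++ h b = r ++ h c ++ s →
    (r = [] ∧ a = c) ∨ (s = [] ∧ b = c)

/-- `h` is a strongly synchronizing morphism. -/
def StronglySynchronizing {α β : Type*} (h : α → List β) : Prop :=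
  Synchronizing h ∧ ∀ (a b c : α) (x y : List β), h c = x ++ y →
    x <+: h a → y <:+ h b → c = a ∨ c = b

/-- The 15-uniform morphism μ from Σ₆ to Σ₃. -/
def mu : Fin 6 → List (Fin 3) :=
  ![[0,1,2,1,0,2,1,2,0,1,0,2,0,1,2],
    [2,0,1,0,2,0,1,2,1,0,1,2,0,2,1],
    [0,1,2,1,0,2,0,1,0,2,1,2,0,1,0],
    [2,0,1,2,1,0,2,1,2,0,2,1,0,1,2],
    [1,0,2,1,2,0,1,2,1,0,1,2,0,2,1],
    [1,0,2,0,1,0,2,1,2,0,2,1,0,1,2]]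

/-! For an `n`-uniform morphism an occurrence of `h c` in `h a ++ h b`, or a split of `h c` into
a prefix of `h a` and a suffix of `h b`, is determined by an offset `k ≤ n`. Both conditions
therefore reduce to finitely many comparisons of words, which for `μ` are checked by `decide`. -/

section UniformMorphism

variable {α β : Type*} {h : α → List β} {n : ℕ}

theorem Synchronizing.of_uniform (hlen : ∀ a, (h a).length = n)
    (hwin : ∀ a b c (k : Fin (n + 1)), ((h a ++ h b).drop k).take n = h c →
      (k.val = 0 ∧ a = c) ∨ (k.val = n ∧ b = c)) :
    Synchronizing h := by
  intro a b c r s hab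
  have hsum : r.length + (n + s.length) = n + n := by
    simpa [hlen] using (congrArg List.length hab).symm
  have hwindow : ((h a ++ h b).drop r.length).take n = h c := by
    rw [hab, List.append_assoc, List.drop_left, List.take_left' (hlen c)]
  rcases hwin a b c ⟨r.length, by omega⟩ hwindow with ⟨hr, hac⟩ | ⟨hr, hbc⟩
  · exact .inl ⟨List.eq_nil_of_length_eq_zero hr, hac⟩
  · exact .inr ⟨List.eq_nil_of_length_eq_zero (by simp only at hr; omega), hbc⟩

theorem StronglySynchronizing.of_uniform (hsync : Synchronizing h)
    (hlen : ∀ a, (h a).length = n)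
    (hsplit : ∀ a b c (k : Fin (n + 1)), h c = (h a).take k ++ (h b).drop k → c = a ∨ c = b) :
    StronglySynchronizing h := by
  refine ⟨hsync, fun a b c x y hc hx hy => ?_⟩
  have hsum : x.length + y.length = n := by
    simpa [hlen] using (congrArg List.length hc).symm
  have hxa : x = (h a).take x.length := List.prefix_iff_eq_take.mp hx
  have hyb : y = (h b).drop x.length := by
    rw [List.suffix_iff_eq_drop.mp hy, hlen]
    congr 1
    omega
  exact hsplit a b c ⟨x.length, by omega⟩ (by rw [hc, ← hxa, ← hyb])

end UniformMorphism

theorem length_mu (a : Fin 6) : (mu a).length = 15 := by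
  fin_cases a <;> rfl

theorem mu_strongly_synchronizing : StronglySynchronizing mu :=
  .of_uniform (.of_uniform length_mu (by decide)) length_mu (by decide)
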